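/- Let W and W′ be cellular algebras with bases R and R′, let φ : W → W′ be a weak isomorphism, and let M ∈ W have real coefficients in the basis R. Then φ(S⁺(M)) = S⁺(φ(M)), where S⁺ denotes the positive support. Consequently, S⁺(M) and S⁺(φ(M)) are cospectral. -/

import Mathlib

open Matrix

/-- The all-ones matrix `J`. -/
def allOnes (V : Type*) : Matrix V V ℂ := Matrix.of fun _ _ => (1 : ℂ)

/-- A cellular algebra: a subalgebra of `Matrix V V ℂ` (hence containing `I`) that is
closed under Hadamard (entrywise) product and conjugate transpose, and contains the
all-ones matrix `J`. -/
def IsCellular {V : Type*} [Fintype V] [DecidableEq V]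
    (W : Subalgebra ℂ (Matrix V V ℂ)) : Prop :=
  (∀ A ∈ W, ∀ B ∈ W, A ⊙ B ∈ W) ∧ (∀ A ∈ W, Aᴴ ∈ W) ∧ allOnes V ∈ W

/-- A 0-1 matrix. -/
def Is01 {V : Type*} (M : Matrix V V ℂ) : Prop := ∀ u v, M u v = 0 ∨ M u v = 1

/-- `R` is a basis of `W` consisting of 0-1 matrices, whose sum is the all-ones matrix. -/
def IsStdBasis {V : Type*} [Fintype V] [DecidableEq V]
    (W : Subalgebra ℂ (Matrix V V ℂ)) (R : Finset (Matrix V V ℂ)) : Prop :=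
  (∀ M ∈ R, Is01 M) ∧ (↑R ⊆ (W : Set (Matrix V V ℂ))) ∧
    LinearIndependent ℂ ((↑) : (↑R : Set (Matrix V V ℂ)) → Matrix V V ℂ) ∧
    Submodule.span ℂ (↑R : Set (Matrix V V ℂ)) = Subalgebra.toSubmodule W ∧
    ∑ M ∈ R, M = allOnes V


/-- A weak isomorphism between cellular algebras: a bijection from `W` onto `W′`
preserving addition, scalar multiplication, matrix multiplication, Hadamard
multiplication and conjugate transposition. -/
def IsWeakIso {V V2 : Type*} [Fintype V] [DecidableEq V] [Fintype V2] [DecidableEq V2]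
    (W : Subalgebra ℂ (Matrix V V ℂ)) (W2 : Subalgebra ℂ (Matrix V2 V2 ℂ))
    (f : Matrix V V ℂ → Matrix V2 V2 ℂ) : Prop :=
  Set.BijOn f (W : Set (Matrix V V ℂ)) (W2 : Set (Matrix V2 V2 ℂ)) ∧
  (∀ A ∈ W, ∀ B ∈ W, f (A + B) = f A + f B) ∧
  (∀ (c : ℂ), ∀ A ∈ W, f (c • A) = c • f A) ∧
  (∀ A ∈ W, ∀ B ∈ W, f (A * B) = f A * f B) ∧
  (∀ A ∈ W, ∀ B ∈ W, f (A ⊙ B) = f A ⊙ f B) ∧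
  (∀ A ∈ W, f Aᴴ = (f A)ᴴ)


/-- The positive support of a matrix: the 0-1 matrix indicating the entries that are
(strictly positive) real numbers. -/
noncomputable def posSupp {V : Type*} (M : Matrix V V ℂ) : Matrix V V ℂ :=
  Matrix.of fun u v => if 0 < (M u v).re ∧ (M u v).im = 0 then 1 else 0

/-!
The basis relations of a cellular algebra are 0-1 matrices with disjoint supports, so
`S⁺(∑ a_R R)` is the sum of the relations `R` with `a_R > 0`. A weak isomorphism sends the basis
relations to Hadamard-idempotent, pairwise Hadamard-orthogonal matrices, so the same description
holds for `S⁺(φ(M))`, and additivity of `φ` gives `φ(S⁺(M)) = S⁺(φ(M))`.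

For cospectrality: `J (X ⊙ I) J = tr(X) J` and `φ` fixes `I` and `J`, so `φ` preserves traces, hence
the traces of all powers. Over `ℂ` these power sums determine the multiset of eigenvalues, and so
the characteristic polynomial.
-/

open Polynomial Module

namespace Module.End

variable {K M : Type*} [Field K] [AddCommGroup M] [Module K M] [FiniteDimensional K M]

theorem trace_restrict_maxGenEigenspace_pow (φ : End K M) (μ : K) (k : ℕ) :
    LinearMap.trace K _ ((φ.restrict (φ.mapsTo_maxGenEigenspace_of_comm rfl μ)) ^ k) =
      μ ^ k * finrank K (φ.maxGenEigenspace μ) := by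
  set ψ := φ.restrict (φ.mapsTo_maxGenEigenspace_of_comm rfl μ)
  have hnil : IsNilpotent (ψ - algebraMap K _ μ) := by
    convert φ.isNilpotent_restrict_maxGenEigenspace_sub_algebraMap μ using 1
    ext; rfl
  induction k with
  | zero => simp
  | succ k ih =>
    rw [pow_succ, mul_eq_comp, LinearMap.trace_comp_eq_mul_of_commute_of_isNilpotent μ
      (Commute.pow_left rfl k) hnil, ih]
    ring

theorem trace_pow_eq_sum_roots_charpoly_pow [IsAlgClosed K] (φ : End K M) (k : ℕ) :
    LinearMap.trace K M (φ ^ k) = (φ.charpoly.roots.map (· ^ k)).sum := by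
  classical
  have hint : DirectSum.IsInternal φ.maxGenEigenspace :=
    DirectSum.isInternal_submodule_of_iSupIndep_of_iSup_eq_top
      φ.independent_maxGenEigenspace φ.iSup_maxGenEigenspace_eq_top
  have hfin : {μ | φ.maxGenEigenspace μ ≠ ⊥}.Finite :=
    WellFoundedGT.finite_ne_bot_of_iSupIndep φ.independent_maxGenEigenspace
  have hspec : hfin.toFinset = φ.charpoly.roots.toFinset := by
    ext μ
    rw [Set.Finite.mem_toFinset, Multiset.mem_toFinset, ← Multiset.count_ne_zero,
      count_roots, ← LinearMap.finrank_maxGenEigenspace_eq]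
    simp
  rw [LinearMap.trace_eq_sum_trace_restrict' hint hfin
      (fun μ => φ.mapsTo_maxGenEigenspace_of_comm (Commute.pow_right rfl k) μ),
    Finset.sum_multiset_map_count, hspec]
  refine Finset.sum_congr rfl fun μ _ => ?_
  rw [← pow_restrict k (φ.mapsTo_maxGenEigenspace_of_comm rfl μ),
    trace_restrict_maxGenEigenspace_pow, LinearMap.finrank_maxGenEigenspace_eq, count_roots,
    nsmul_eq_mul, mul_comm]

end Module.End

theorem Finset.eq_zero_of_forall_sum_mul_pow_eq_zero {K : Type*} [Field K] {F : Finset K}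
    {c : K → K} (h : ∀ k : ℕ, ∑ μ ∈ F, c μ * μ ^ k = 0) : ∀ μ ∈ F, c μ = 0 := by
  set e := F.equivFin
  have hv : (fun i => c (e.symm i)) = 0 := by
    refine Matrix.eq_zero_of_forall_pow_sum_mul_pow_eq_zero (f := fun i => (e.symm i : K))
      (Subtype.val_injective.comp e.symm.injective) fun k => ?_
    rw [e.symm.sum_comp (fun μ => c μ * (μ : K) ^ (k : ℕ)),
      F.sum_coe_sort (fun μ => c μ * μ ^ (k : ℕ))]
    exact h k
  intro μ hμ
  simpa using congrFun hv (e ⟨μ, hμ⟩)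

theorem Multiset.sum_map_pow_eq_sum_count_mul {K : Type*} [CommRing K] [DecidableEq K]
    (s : Multiset K) {F : Finset K} (hF : s.toFinset ⊆ F) (k : ℕ) :
    (s.map (· ^ k)).sum = ∑ μ ∈ F, (s.count μ : K) * μ ^ k := by
  simp_rw [Finset.sum_multiset_map_count, nsmul_eq_mul]
  refine Finset.sum_subset hF fun μ _ hμ => ?_
  rw [Multiset.count_eq_zero.mpr (by simpa using hμ), Nat.cast_zero, zero_mul]

theorem Multiset.eq_of_sum_map_pow_eq {K : Type*} [Field K] [CharZero K] {s t : Multiset K}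
    (h : ∀ k : ℕ, (s.map (· ^ k)).sum = (t.map (· ^ k)).sum) : s = t := by
  classical
  set F := s.toFinset ∪ t.toFinset
  have hcount := Finset.eq_zero_of_forall_sum_mul_pow_eq_zero (F := F)
    (c := fun μ => (s.count μ : K) - t.count μ) fun k => by
      rw [← sub_eq_zero.mpr (h k), s.sum_map_pow_eq_sum_count_mul Finset.subset_union_left,
        t.sum_map_pow_eq_sum_count_mul Finset.subset_union_right, ← Finset.sum_sub_distrib]
      exact Finset.sum_congr rfl fun μ _ => sub_mul _ _ _
  ext μ
  by_cases hμ : μ ∈ F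
  · exact_mod_cast sub_eq_zero.mp (hcount μ hμ)
  · simp only [F, Finset.mem_union, Multiset.mem_toFinset, not_or] at hμ
    rw [Multiset.count_eq_zero.mpr hμ.1, Multiset.count_eq_zero.mpr hμ.2]

theorem Matrix.trace_pow_eq_sum_roots_charpoly_pow {K n : Type*} [Field K] [IsAlgClosed K]
    [Fintype n] [DecidableEq n] (A : Matrix n n K) (k : ℕ) :
    (A ^ k).trace = (A.charpoly.roots.map (· ^ k)).sum := by
  rw [← Matrix.trace_toLin'_eq, Matrix.toLin'_pow,
    Module.End.trace_pow_eq_sum_roots_charpoly_pow, Matrix.charpoly_toLin']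

theorem Matrix.charpoly_eq_of_trace_pow_eq {K n m : Type*} [Field K] [IsAlgClosed K] [CharZero K]
    [Fintype n] [DecidableEq n] [Fintype m] [DecidableEq m] (A : Matrix n n K) (B : Matrix m m K)
    (h : ∀ k : ℕ, (A ^ k).trace = (B ^ k).trace) : A.charpoly = B.charpoly := by
  have hroots : A.charpoly.roots = B.charpoly.roots :=
    Multiset.eq_of_sum_map_pow_eq fun k => by
      rw [← A.trace_pow_eq_sum_roots_charpoly_pow, ← B.trace_pow_eq_sum_roots_charpoly_pow, h k]
  rw [(IsAlgClosed.splits A.charpoly).eq_prod_roots_of_monic A.charpoly_monic,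
    (IsAlgClosed.splits B.charpoly).eq_prod_roots_of_monic B.charpoly_monic, hroots]

theorem Is01.hadamard_self {V : Type*} {N : Matrix V V ℂ} (h : Is01 N) : N ⊙ N = N := by
  ext u v
  rcases h u v with h | h <;> simp [h]

theorem pairwise_hadamard_eq_zero_of_sum_eq_allOnes {V : Type*} [Fintype V]
    {R : Finset (Matrix V V ℂ)} (h01 : ∀ N ∈ R, Is01 N) (hJ : ∑ N ∈ R, N = allOnes V) :
    (R : Set (Matrix V V ℂ)).Pairwise fun N N' => N ⊙ N' = 0 := by
  intro N hN N' hN' hne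
  ext u v
  rw [Matrix.hadamard_apply, Matrix.zero_apply, mul_eq_zero]
  by_contra! hboth
  have hre : ∀ L ∈ R, 0 ≤ (L u v).re := fun L hL => by rcases h01 L hL u v with h | h <;> simp [h]
  have hsum : ∑ L ∈ R, (L u v).re = 1 := by
    simpa [allOnes, Matrix.sum_apply] using congrArg (fun A : Matrix V V ℂ => (A u v).re) hJ
  have hpair : (N u v).re + (N' u v).re ≤ ∑ L ∈ R, (L u v).re := by
    rw [← Finset.sum_pair (f := fun L => (L u v).re) hne]
    exact Finset.sum_le_sum_of_subset_of_nonneg (Finset.insert_subset hN (by simpa using hN'))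
      fun L hL _ => hre L hL
  rw [(h01 N hN u v).resolve_left hboth.1, (h01 N' hN' u v).resolve_left hboth.2, hsum] at hpair
  norm_num at hpair

theorem posSupp_sum_smul {V ι : Type*} [Fintype V] (s : Finset ι) (B : ι → Matrix V V ℂ)
    (a : ι → ℝ) (hidem : ∀ i ∈ s, B i ⊙ B i = B i)
    (horth : (s : Set ι).Pairwise fun i j => B i ⊙ B j = 0) :
    posSupp (∑ i ∈ s, (a i : ℂ) • B i) = ∑ i ∈ s with 0 < a i, B i := by
  ext u v
  simp only [posSupp, Matrix.of_apply, Matrix.sum_apply, Matrix.smul_apply, smul_eq_mul,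
    Finset.sum_filter]
  by_cases hhit : ∃ i ∈ s, B i u v ≠ 0
  · obtain ⟨i, hi, hne⟩ := hhit
    have hone : B i u v = 1 := by
      have := congrFun (congrFun (hidem i hi) u) v
      rw [Matrix.hadamard_apply] at this
      exact mul_left_cancel₀ hne (this.trans (mul_one _).symm)
    have hzero : ∀ j ∈ s, j ≠ i → B j u v = 0 := fun j hj hji => by
      have := congrFun (congrFun (horth hj hi hji) u) v
      rw [Matrix.hadamard_apply, Matrix.zero_apply, hone, mul_one] at this
      exact this
    rw [Finset.sum_eq_single_of_mem i hi fun j hj hji => by rw [hzero j hj hji, mul_zero],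
      Finset.sum_eq_single_of_mem i hi fun j hj hji => by rw [hzero j hj hji, ite_self], hone]
    simp
  · push Not at hhit
    rw [Finset.sum_eq_zero fun i hi => by rw [hhit i hi, mul_zero],
      Finset.sum_eq_zero fun i hi => by rw [hhit i hi, ite_self]]
    simp

theorem allOnes_mul_hadamard_one_mul_allOnes {n : Type*} [Fintype n] [DecidableEq n]
    (X : Matrix n n ℂ) : allOnes n * (X ⊙ 1) * allOnes n = X.trace • allOnes n := by
  ext u v
  simp [allOnes, Matrix.hadamard_one, Matrix.mul_apply, Matrix.trace, Matrix.diagonal_apply]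

namespace IsWeakIso

variable {V V2 : Type*} [Fintype V] [DecidableEq V] [Fintype V2] [DecidableEq V2]
  {W : Subalgebra ℂ (Matrix V V ℂ)} {W2 : Subalgebra ℂ (Matrix V2 V2 ℂ)}
  {f : Matrix V V ℂ → Matrix V2 V2 ℂ}

theorem map_add (hf : IsWeakIso W W2 f) {A B : Matrix V V ℂ} (hA : A ∈ W) (hB : B ∈ W) :
    f (A + B) = f A + f B :=
  hf.2.1 A hA B hB

theorem map_smul (hf : IsWeakIso W W2 f) (c : ℂ) {A : Matrix V V ℂ} (hA : A ∈ W) :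
    f (c • A) = c • f A :=
  hf.2.2.1 c A hA

theorem map_mul (hf : IsWeakIso W W2 f) {A B : Matrix V V ℂ} (hA : A ∈ W) (hB : B ∈ W) :
    f (A * B) = f A * f B :=
  hf.2.2.2.1 A hA B hB

theorem map_hadamard (hf : IsWeakIso W W2 f) {A B : Matrix V V ℂ} (hA : A ∈ W) (hB : B ∈ W) :
    f (A ⊙ B) = f A ⊙ f B :=
  hf.2.2.2.2.1 A hA B hB

theorem map_zero (hf : IsWeakIso W W2 f) : f 0 = 0 := by
  simpa using hf.map_add (zero_mem W) (zero_mem W)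

theorem map_sum (hf : IsWeakIso W W2 f) {ι : Type*} (s : Finset ι) {B : ι → Matrix V V ℂ}
    (hB : ∀ i ∈ s, B i ∈ W) : f (∑ i ∈ s, B i) = ∑ i ∈ s, f (B i) := by
  induction s using Finset.cons_induction with
  | empty => simpa using hf.map_zero
  | cons i s hi ih =>
    rw [Finset.forall_mem_cons] at hB
    rw [Finset.sum_cons, Finset.sum_cons, hf.map_add hB.1 (sum_mem hB.2), ih hB.2]

theorem map_one (hf : IsWeakIso W W2 f) : f 1 = 1 := by
  obtain ⟨Y, hY, hfY⟩ := hf.1.surjOn (one_mem W2)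
  simpa [hfY] using (hf.map_mul (one_mem W) hY).symm

theorem map_pow (hf : IsWeakIso W W2 f) {A : Matrix V V ℂ} (hA : A ∈ W) (k : ℕ) :
    f (A ^ k) = f A ^ k := by
  induction k with
  | zero => simpa using hf.map_one
  | succ k ih => rw [pow_succ, hf.map_mul (pow_mem hA k) hA, ih, pow_succ]

theorem map_allOnes (hf : IsWeakIso W W2 f) (hJ : allOnes V ∈ W) (hJ2 : allOnes V2 ∈ W2) :
    f (allOnes V) = allOnes V2 := by
  obtain ⟨Y, hY, hfY⟩ := hf.1.surjOn hJ2
  have hJY : allOnes V ⊙ Y = Y := by ext; simp [allOnes]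
  have h := hf.map_hadamard hJ hY
  rw [hJY, hfY] at h
  ext u v
  simpa [allOnes] using (congrFun (congrFun h u) v).symm

theorem trace_map (hf : IsWeakIso W W2 f) (hW : IsCellular W) (hJ2 : allOnes V2 ∈ W2)
    {A : Matrix V V ℂ} (hA : A ∈ W) : (f A).trace = A.trace := by
  rcases isEmpty_or_nonempty V2 with hV2 | hV2
  · -- `f 1 = f 0` in the trivial algebra over `V2`, so injectivity leaves `V` empty as well
    have h10 : (1 : Matrix V V ℂ) = 0 :=
      hf.1.injOn (one_mem W) (zero_mem W) (Subsingleton.elim _ _)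
    have : IsEmpty V := ⟨fun v => by simpa using congrFun (congrFun h10 v) v⟩
    simp [Matrix.trace]
  obtain ⟨u⟩ := hV2
  have hJ := hW.2.2
  have hdiag := hW.1 A hA 1 (one_mem W)
  have key : (f A).trace • allOnes V2 = A.trace • allOnes V2 := by
    rw [← allOnes_mul_hadamard_one_mul_allOnes, ← hf.map_allOnes hJ hJ2, ← hf.map_one,
      ← hf.map_hadamard hA (one_mem W), ← hf.map_mul hJ hdiag, ← hf.map_mul (mul_mem hJ hdiag) hJ,
      allOnes_mul_hadamard_one_mul_allOnes, hf.map_smul _ hJ, hf.map_allOnes hJ hJ2]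
  simpa [allOnes] using congrFun (congrFun key u) u

theorem charpoly_map (hf : IsWeakIso W W2 f) (hW : IsCellular W) (hJ2 : allOnes V2 ∈ W2)
    {A : Matrix V V ℂ} (hA : A ∈ W) : (f A).charpoly = A.charpoly :=
  Matrix.charpoly_eq_of_trace_pow_eq _ _ fun k => by
    rw [← hf.map_pow hA, hf.trace_map hW hJ2 (pow_mem hA k)]

end IsWeakIso

theorem stmt_14_general {V V2 : Type*} [Fintype V] [DecidableEq V] [Fintype V2] [DecidableEq V2]
    (W : Subalgebra ℂ (Matrix V V ℂ)) (W2 : Subalgebra ℂ (Matrix V2 V2 ℂ))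
    (hW : IsCellular W) (hW2 : IsCellular W2)
    (R : Finset (Matrix V V ℂ)) (hR : IsStdBasis W R)
    (f : Matrix V V ℂ → Matrix V2 V2 ℂ) (hf : IsWeakIso W W2 f)
    (M : Matrix V V ℂ) (a : Matrix V V ℂ → ℝ)
    (hM : M = ∑ N ∈ R, (a N : ℂ) • N) :
    f (posSupp M) = posSupp (f M) ∧
      (posSupp (f M)).charpoly = (posSupp M).charpoly := by
  obtain ⟨h01, hRW, -, -, hJ⟩ := hR
  have hidem : ∀ N ∈ R, N ⊙ N = N := fun N hN => (h01 N hN).hadamard_self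
  have horth := pairwise_hadamard_eq_zero_of_sum_eq_allOnes h01 hJ
  have hP : posSupp M = ∑ N ∈ R with 0 < a N, N := hM ▸ posSupp_sum_smul R id a hidem horth
  have hPW : posSupp M ∈ W := hP ▸ sum_mem fun N hN => hRW (Finset.mem_filter.mp hN).1
  have hfM : f M = ∑ N ∈ R, (a N : ℂ) • f N := by
    rw [hM, hf.map_sum R fun N hN => W.smul_mem (hRW hN) _]
    exact Finset.sum_congr rfl fun N hN => hf.map_smul _ (hRW hN)
  have hfP : f (posSupp M) = posSupp (f M) := by
    rw [hP, hf.map_sum _ fun N hN => hRW (Finset.mem_filter.mp hN).1, hfM,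
      posSupp_sum_smul R f a]
    · intro N hN
      rw [← hf.map_hadamard (hRW hN) (hRW hN), hidem N hN]
    · refine horth.imp_on fun N hN N' hN' _ hNN' => ?_
      rw [← hf.map_hadamard (hRW hN) (hRW hN'), hNN', hf.map_zero]
  exact ⟨hfP, hfP ▸ hf.charpoly_map hW hW2.2.2 hPW⟩

/-- A weak isomorphism commutes with the positive support of elements with real
coefficients; consequently `S⁺(M)` and `S⁺(φ(M))` are cospectral. -/
theorem stmt_14 {V V2 : Type*} [Fintype V] [DecidableEq V] [Fintype V2] [DecidableEq V2]
    (W : Subalgebra ℂ (Matrix V V ℂ)) (W2 : Subalgebra ℂ (Matrix V2 V2 ℂ))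
    (hW : IsCellular W) (hW2 : IsCellular W2)
    (R : Finset (Matrix V V ℂ)) (hR : IsStdBasis W R)
    (R2 : Finset (Matrix V2 V2 ℂ)) (hR2 : IsStdBasis W2 R2)
    (f : Matrix V V ℂ → Matrix V2 V2 ℂ) (hf : IsWeakIso W W2 f)
    (M : Matrix V V ℂ) (a : Matrix V V ℂ → ℝ)
    (hM : M = ∑ N ∈ R, (a N : ℂ) • N) :
    f (posSupp M) = posSupp (f M) ∧
      (posSupp (f M)).charpoly = (posSupp M).charpoly :=
  stmt_14_general W W2 hW hW2 R hR f hf M a hM
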